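/- Let σ > 0, d ≥ 1, and x_1,...,x_T ∈ ℝ^d with ‖x_s‖₂ ≤ 1. With M_0 = I_d, M_s = M_{s−1} + σ^{-2} x_s x_sᵀ, and z_s = √(x_sᵀ M_{s−1}^{-1} x_s), we have ∑_{s=1}^T z_s² ≤ d·log(1 + T/(dσ²)) / log(1 + 1/σ²). -/

import Mathlib

/-!
By the matrix determinant lemma each update multiplies `det M` by `1 + z_s² / σ²`, so
`∑ log (1 + z_s² / σ²) = log det M_T`. AM-GM on the eigenvalues bounds `det M_T` by
`(tr M_T / d) ^ d ≤ (1 + T / (d σ²)) ^ d`. Finally `M_{s-1} ⪰ 1` gives `z_s² ≤ ‖x_s‖² ≤ 1`, and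
on `[0, 1]` concavity of `log` gives `z_s² log (1 + 1/σ²) ≤ log (1 + z_s² / σ²)`.
-/

open Matrix

theorem Real.prod_le_sum_div_card_pow {ι : Type*} (s : Finset ι) {f : ι → ℝ}
    (hf : ∀ i ∈ s, 0 ≤ f i) : ∏ i ∈ s, f i ≤ ((∑ i ∈ s, f i) / s.card) ^ s.card := by
  rcases s.eq_empty_or_nonempty with rfl | hs
  · simp
  have hcard : (0 : ℝ) < s.card := by exact_mod_cast hs.card_pos
  have amgm := Real.geom_mean_le_arith_mean s (fun _ => 1) f (fun _ _ => zero_le_one)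
    (by simpa using hcard) hf
  simp only [Real.rpow_one, one_mul, Finset.sum_const, nsmul_eq_mul, mul_one] at amgm
  calc ∏ i ∈ s, f i = ((∏ i ∈ s, f i) ^ (s.card : ℝ)⁻¹) ^ s.card :=
        (Real.rpow_inv_natCast_pow (Finset.prod_nonneg hf) hs.card_pos.ne').symm
    _ ≤ ((∑ i ∈ s, f i) / s.card) ^ s.card :=
        pow_le_pow_left₀ (Real.rpow_nonneg (Finset.prod_nonneg hf) _) amgm _

theorem Real.mul_log_one_add_le_log_one_add_mul {c y : ℝ} (hc : -1 < c) (hy₀ : 0 ≤ y)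
    (hy₁ : y ≤ 1) : y * Real.log (1 + c) ≤ Real.log (1 + c * y) := by
  rw [← Real.log_rpow (by linarith), mul_comm c]
  exact Real.log_le_log (Real.rpow_pos_of_pos (by linarith) y)
    (rpow_one_add_le_one_add_mul_self hc.le hy₀ hy₁)

namespace Matrix

variable {n : Type*} [DecidableEq n]

theorem PosSemidef.posDef_of_sub_one {A : Matrix n n ℝ} (hA : (A - 1).PosSemidef) : A.PosDef := by
  simpa using PosDef.posSemidef_add hA PosDef.one

variable [Fintype n]

theorem PosSemidef.det_le_trace_div_card_pow {A : Matrix n n ℝ} (hA : A.PosSemidef) :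
    A.det ≤ (A.trace / Fintype.card n) ^ Fintype.card n := by
  rw [hA.isHermitian.det_eq_prod_eigenvalues, hA.isHermitian.trace_eq_sum_eigenvalues]
  simpa using Real.prod_le_sum_div_card_pow Finset.univ fun i _ => hA.eigenvalues_nonneg i

theorem PosSemidef.one_sub_inv_of_sub_one {A : Matrix n n ℝ} (hA : (A - 1).PosSemidef) :
    (1 - A⁻¹).PosSemidef := by
  have hA' : A.PosDef := hA.posDef_of_sub_one
  have hunit : IsUnit A.det := (isUnit_iff_isUnit_det A).mp hA'.isUnit
  -- `1 - A⁻¹ = A⁻¹ (A² - A) A⁻¹`, and `A² - A = (A - 1)² + (A - 1)`.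
  have hsq : (A * A - A).PosSemidef := by
    rw [show A * A - A = (A - 1) ^ 2 + (A - 1) by noncomm_ring]
    exact (hA.pow 2).add hA
  convert hsq.conjTranspose_mul_mul_same A⁻¹ using 1
  rw [hA'.isHermitian.inv.eq, Matrix.mul_sub, Matrix.sub_mul, ← Matrix.mul_assoc,
    nonsing_inv_mul _ hunit, Matrix.one_mul, mul_nonsing_inv _ hunit, Matrix.one_mul]

theorem dotProduct_inv_mulVec_le_of_posSemidef_sub_one {A : Matrix n n ℝ}
    (hA : (A - 1).PosSemidef) (v : n → ℝ) : v ⬝ᵥ A⁻¹ *ᵥ v ≤ v ⬝ᵥ v := by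
  have := hA.one_sub_inv_of_sub_one.dotProduct_mulVec_nonneg v
  rw [star_trivial, sub_mulVec, one_mulVec, dotProduct_sub] at this
  linarith

theorem det_add_smul_vecMulVec {R : Type*} [CommRing R] {A : Matrix n n R} (hA : IsUnit A.det)
    (c : R) (u v : n → R) :
    (A + c • vecMulVec u v).det = A.det * (1 + c * (v ⬝ᵥ A⁻¹ *ᵥ u)) := by
  rw [← vecMulVec_smul, vecMulVec_eq Unit, det_add_replicateCol_mul_replicateRow hA,
    det_unique (1 + _ : Matrix Unit Unit R), add_apply, one_apply_eq, Matrix.mul_assoc,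
    ← replicateCol_mulVec, replicateRow_mul_replicateCol_apply, smul_dotProduct,
    smul_eq_mul]

section RankOneUpdates

variable {c : ℝ} {x : ℕ → n → ℝ} {M : ℕ → Matrix n n ℝ}

theorem posSemidef_sub_one_of_rankOne_updates (hc : 0 ≤ c) (hM0 : M 0 = 1)
    (hM : ∀ s, M (s + 1) = M s + c • vecMulVec (x (s + 1)) (x (s + 1))) (k : ℕ) :
    (M k - 1).PosSemidef := by
  induction k with
  | zero => simpa [hM0] using PosSemidef.zero
  | succ k ih =>
    have hx : (vecMulVec (x (k + 1)) (x (k + 1))).PosSemidef := by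
      simpa using posSemidef_vecMulVec_self_star (x (k + 1))
    rw [hM k, add_sub_right_comm]
    exact ih.add (hx.smul hc)

theorem det_eq_prod_of_rankOne_updates (hc : 0 ≤ c) (hM0 : M 0 = 1)
    (hM : ∀ s, M (s + 1) = M s + c • vecMulVec (x (s + 1)) (x (s + 1))) (k : ℕ) :
    (M k).det = ∏ s ∈ Finset.Icc 1 k, (1 + c * (x s ⬝ᵥ (M (s - 1))⁻¹ *ᵥ x s)) := by
  induction k with
  | zero => simp [hM0]
  | succ k ih =>
    have hunit : IsUnit (M k).det :=
      (isUnit_iff_isUnit_det _).mp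
        (posSemidef_sub_one_of_rankOne_updates hc hM0 hM k).posDef_of_sub_one.isUnit
    rw [Finset.prod_Icc_succ_top (by omega), ← ih, hM k, det_add_smul_vecMulVec hunit,
      Nat.add_sub_cancel]

theorem trace_eq_of_rankOne_updates (hM0 : M 0 = 1)
    (hM : ∀ s, M (s + 1) = M s + c • vecMulVec (x (s + 1)) (x (s + 1))) (k : ℕ) :
    (M k).trace = Fintype.card n + c * ∑ s ∈ Finset.Icc 1 k, x s ⬝ᵥ x s := by
  induction k with
  | zero => simp [hM0]
  | succ k ih =>
    rw [hM k, trace_add, ih, trace_smul, trace_vecMulVec, Finset.sum_Icc_succ_top (by omega),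
      smul_eq_mul]
    ring

theorem det_le_of_rankOne_updates (hc : 0 ≤ c) (hM0 : M 0 = 1)
    (hM : ∀ s, M (s + 1) = M s + c • vecMulVec (x (s + 1)) (x (s + 1))) {k : ℕ}
    (hx : ∀ s ∈ Finset.Icc 1 k, x s ⬝ᵥ x s ≤ 1) :
    (M k).det ≤ ((Fintype.card n + c * k) / Fintype.card n) ^ Fintype.card n := by
  have hPSD := (posSemidef_sub_one_of_rankOne_updates hc hM0 hM k).posDef_of_sub_one.posSemidef
  have htrace : (M k).trace ≤ Fintype.card n + c * k := by
    rw [trace_eq_of_rankOne_updates hM0 hM]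
    gcongr
    simpa using Finset.sum_le_card_nsmul _ _ 1 hx
  calc (M k).det ≤ ((M k).trace / Fintype.card n) ^ Fintype.card n :=
        hPSD.det_le_trace_div_card_pow
    _ ≤ _ := by gcongr; exact div_nonneg hPSD.trace_nonneg (Nat.cast_nonneg _)

end RankOneUpdates

end Matrix

theorem sum_sq_confidence_widths_bound (d T : ℕ) (hd : 1 ≤ d) (σ : ℝ) (hσ : 0 < σ)
    (x : ℕ → Fin d → ℝ) (hx : ∀ s ∈ Finset.Icc 1 T, Real.sqrt (x s ⬝ᵥ x s) ≤ 1)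
    (M : ℕ → Matrix (Fin d) (Fin d) ℝ) (hM0 : M 0 = 1)
    (hMrec : ∀ s, M (s + 1) = M s + (σ ^ 2)⁻¹ • vecMulVec (x (s + 1)) (x (s + 1)))
    (z : ℕ → ℝ) (hz : ∀ s, z s = Real.sqrt (x s ⬝ᵥ (M (s - 1))⁻¹ *ᵥ x s)) :
    ∑ s ∈ Finset.Icc 1 T, (z s) ^ 2 ≤
      d * Real.log (1 + T / (d * σ ^ 2)) / Real.log (1 + 1 / σ ^ 2) := by
  have hc : 0 < (σ ^ 2)⁻¹ := by positivity
  have hxx : ∀ s ∈ Finset.Icc 1 T, x s ⬝ᵥ x s ≤ 1 := fun s hs => Real.sqrt_le_one.mp (hx s hs)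
  have hPSD := posSemidef_sub_one_of_rankOne_updates hc.le hM0 hMrec
  set q : ℕ → ℝ := fun s => x s ⬝ᵥ (M (s - 1))⁻¹ *ᵥ x s
  have hq₀ : ∀ s, 0 ≤ q s := fun s => by
    simpa using (hPSD (s - 1)).posDef_of_sub_one.inv.posSemidef.dotProduct_mulVec_nonneg (x s)
  have hq₁ : ∀ s ∈ Finset.Icc 1 T, q s ≤ 1 := fun s hs =>
    (dotProduct_inv_mulVec_le_of_posSemidef_sub_one (hPSD (s - 1)) (x s)).trans (hxx s hs)
  have hdet := det_le_of_rankOne_updates hc.le hM0 hMrec hxx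
  rw [Fintype.card_fin, show ((d : ℝ) + (σ ^ 2)⁻¹ * T) / d = 1 + T / (d * σ ^ 2) by
    field_simp] at hdet
  rw [le_div_iff₀ (Real.log_pos (lt_add_of_pos_right 1 (by positivity))), Finset.sum_mul,
    ← Real.log_pow]
  calc ∑ s ∈ Finset.Icc 1 T, z s ^ 2 * Real.log (1 + 1 / σ ^ 2)
      ≤ ∑ s ∈ Finset.Icc 1 T, Real.log (1 + (σ ^ 2)⁻¹ * q s) :=
        Finset.sum_le_sum fun s hs => by
          rw [hz s, Real.sq_sqrt (hq₀ s), one_div]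
          exact Real.mul_log_one_add_le_log_one_add_mul (by linarith) (hq₀ s) (hq₁ s hs)
    _ = Real.log (M T).det := by
        rw [det_eq_prod_of_rankOne_updates hc.le hM0 hMrec, Real.log_prod]
        exact fun s _ => by have := hq₀ s; positivity
    _ ≤ Real.log ((1 + T / (d * σ ^ 2)) ^ d) :=
        Real.log_le_log (hPSD T).posDef_of_sub_one.det_pos hdet
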